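/- Two-fund theorem: Assume K (the matrix obtained by stacking M̂ on top of B^T) is invertible, and define x^o = K^{-1} · (d̂ − b̂, 0, 0) and x^∞ = K^{-1} · (ĉ, 0, 0). Then for every a > 0, the unique optimal solution x^a of the hedging problem satisfies x^a = x^∞ + (1/(2a)) x^o. -/

import Mathlib

/-!
A hedge `u = (x_P, x_W)` adds to the profit `y` the linear combination `∑ s, u s • X s` of the
indicators `X s` of the realised price and weather index, so `F_a = E[Y] - a Var[Y]` is a concave
quadratic in `u`: its Hessian is `-2a M`, `M` being the covariance matrix of the indicators, and its
gradient at `u` is `s ↦ E[X s] - 2a Cov(Y_u, X s)`.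

Each block of indicators sums to `1`, so each block of the gradient sums to `1`, and so does each
block of `b`: the rows deleted in `M̂` are redundant. Hence `K x = (ĉ + (d̂ - b̂)/(2a), 0, 0)` says
that `x = x^∞ + x^o/(2a)` is feasible and that its gradient is `b = B (1, 1)`, the Lagrange
condition. For feasible `v` this gives `F_a(v) = F_a(x) - a (v - x)ᵀ M (v - x) ≤ F_a(x)`; equality
forces `M (v - x) = 0`, so `K (v - x) = 0` and `v = x`.
-/

open Finset Matrix Function

section WeightedMoments

variable {Ω ι : Type*} [Fintype Ω] (ψ : Ω → ℝ)

def weightedMean : (Ω → ℝ) →ₗ[ℝ] ℝ where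
  toFun f := ∑ ω, ψ ω * f ω
  map_add' f g := by simp only [Pi.add_apply, mul_add, sum_add_distrib]
  map_smul' c f := by
    simp only [Pi.smul_apply, smul_eq_mul, mul_sum, RingHom.id_apply, mul_left_comm]

def weightedCov : LinearMap.BilinForm ℝ (Ω → ℝ) :=
  LinearMap.mk₂ ℝ (fun f g => weightedMean ψ (f * g) - weightedMean ψ f * weightedMean ψ g)
    (fun f₁ f₂ g => by simp only [add_mul, map_add]; ring)
    (fun c f g => by simp only [smul_mul_assoc, map_smul, smul_eq_mul]; ring)
    (fun f g₁ g₂ => by simp only [mul_add, map_add]; ring)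
    (fun c f g => by simp only [mul_smul_comm, map_smul, smul_eq_mul]; ring)

def weightedCovMatrix (X : ι → Ω → ℝ) : Matrix ι ι ℝ :=
  Matrix.of fun s t => weightedCov ψ (X s) (X t)

def meanVariance (a : ℝ) (Y : Ω → ℝ) : ℝ :=
  weightedMean ψ Y - a * weightedCov ψ Y Y

def meanVarianceGradient (a : ℝ) (Y : Ω → ℝ) (X : ι → Ω → ℝ) : ι → ℝ :=
  fun s => weightedMean ψ (X s) - 2 * a * weightedCov ψ Y (X s)

variable {ψ}

lemma weightedMean_apply (f : Ω → ℝ) : weightedMean ψ f = ∑ ω, ψ ω * f ω := rfl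

lemma weightedCov_apply (f g : Ω → ℝ) :
    weightedCov ψ f g = weightedMean ψ (f * g) - weightedMean ψ f * weightedMean ψ g := rfl

lemma weightedCov_comm (f g : Ω → ℝ) : weightedCov ψ f g = weightedCov ψ g f := by
  simp only [weightedCov_apply, mul_comm f, mul_comm (weightedMean ψ f)]

lemma weightedMean_const (hψ : ∑ ω, ψ ω = 1) (c : ℝ) : weightedMean ψ (fun _ => c) = c := by
  simp [weightedMean_apply, ← sum_mul, hψ]

lemma weightedCov_one_right (hψ : ∑ ω, ψ ω = 1) (f : Ω → ℝ) : weightedCov ψ f 1 = 0 := by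
  have h1 : weightedMean ψ 1 = 1 := weightedMean_const hψ 1
  simp [weightedCov_apply, h1]

lemma weightedMean_sq_sub_weightedMean (hψ : ∑ ω, ψ ω = 1) (f : Ω → ℝ) :
    weightedMean ψ (fun ω => (f ω - weightedMean ψ f) ^ 2) = weightedCov ψ f f := by
  set μ := weightedMean ψ f
  have hexp : (fun ω => (f ω - μ) ^ 2) = f * f - (2 * μ) • f + fun _ => μ ^ 2 := by
    funext ω; simp only [Pi.add_apply, Pi.sub_apply, Pi.mul_apply, Pi.smul_apply, smul_eq_mul]
    ring
  rw [hexp, map_add, map_sub, map_smul, weightedMean_const hψ, weightedCov_apply, smul_eq_mul]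
  ring

lemma weightedCov_self_nonneg (hψ0 : ∀ ω, 0 ≤ ψ ω) (hψ : ∑ ω, ψ ω = 1) (f : Ω → ℝ) :
    0 ≤ weightedCov ψ f f := by
  rw [← weightedMean_sq_sub_weightedMean hψ]
  exact sum_nonneg fun ω _ => mul_nonneg (hψ0 ω) (sq_nonneg _)

variable {X : ι → Ω → ℝ}

lemma sum_meanVarianceGradient {α : Type*} [Fintype α] (hψ : ∑ ω, ψ ω = 1) (a : ℝ)
    (Y : Ω → ℝ) {g : α → ι} (hX : ∑ i, X (g i) = 1) :
    ∑ i, meanVarianceGradient ψ a Y X (g i) = 1 := by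
  simp only [meanVarianceGradient, sum_sub_distrib, ← mul_sum, ← map_sum, hX,
    weightedCov_one_right hψ]
  rw [mul_zero, sub_zero]
  exact weightedMean_const hψ 1

variable [Fintype ι]

lemma weightedCovMatrix_mulVec (w : ι → ℝ) :
    weightedCovMatrix ψ X *ᵥ w = fun s => weightedCov ψ (X s) (∑ t, w t • X t) := by
  funext s
  simp [mulVec, dotProduct, weightedCovMatrix, map_sum, mul_comm]

lemma dotProduct_weightedCovMatrix_mulVec (w : ι → ℝ) :
    w ⬝ᵥ weightedCovMatrix ψ X *ᵥ w
      = weightedCov ψ (∑ s, w s • X s) (∑ s, w s • X s) := by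
  simp only [weightedCovMatrix_mulVec, dotProduct, LinearMap.map_sum₂, LinearMap.map_smul₂,
    smul_eq_mul]

lemma posSemidef_weightedCovMatrix (hψ0 : ∀ ω, 0 ≤ ψ ω) (hψ : ∑ ω, ψ ω = 1) :
    (weightedCovMatrix ψ X).PosSemidef := by
  refine .of_dotProduct_mulVec_nonneg ?_ fun w => ?_
  · ext s t
    exact weightedCov_comm _ _
  · rw [star_trivial, dotProduct_weightedCovMatrix_mulVec]
    exact weightedCov_self_nonneg hψ0 hψ _

lemma meanVariance_add_sum_smul (a : ℝ) (Y : Ω → ℝ) (w : ι → ℝ) :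
    meanVariance ψ a (Y + ∑ s, w s • X s)
      = meanVariance ψ a Y + meanVarianceGradient ψ a Y X ⬝ᵥ w
        - a * (w ⬝ᵥ weightedCovMatrix ψ X *ᵥ w) := by
  rw [dotProduct_weightedCovMatrix_mulVec]
  set Z := ∑ s, w s • X s
  have hmean : weightedMean ψ Z = ∑ s, weightedMean ψ (X s) * w s := by
    simp [Z, map_sum, mul_comm]
  have hcov : weightedCov ψ Y Z = ∑ s, weightedCov ψ Y (X s) * w s := by
    simp [Z, map_sum, mul_comm]
  simp only [meanVariance, meanVarianceGradient, dotProduct, map_add, LinearMap.add_apply,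
    weightedCov_comm Z Y, hmean, hcov, sub_mul, sum_sub_distrib, mul_assoc, ← mul_sum]
  ring

lemma meanVarianceGradient_add_sum_smul (a : ℝ) (Y : Ω → ℝ) (w : ι → ℝ) :
    meanVarianceGradient ψ a (Y + ∑ s, w s • X s) X
      = meanVarianceGradient ψ a Y X - (2 * a) • weightedCovMatrix ψ X *ᵥ w := by
  funext s
  simp only [meanVarianceGradient, weightedCovMatrix_mulVec, map_add, LinearMap.add_apply,
    Pi.sub_apply, Pi.smul_apply, smul_eq_mul, weightedCov_comm (X s)]
  ring

variable {ρ : Type*} [Fintype ρ]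

lemma meanVariance_add_of_gradient_eq_mulVec {a : ℝ} {Y : Ω → ℝ} {B : Matrix ι ρ ℝ}
    {c : ρ → ℝ} (hgrad : meanVarianceGradient ψ a Y X = B *ᵥ c) {w : ι → ℝ} (hw : Bᵀ *ᵥ w = 0) :
    meanVariance ψ a (Y + ∑ s, w s • X s)
      = meanVariance ψ a Y - a * (w ⬝ᵥ weightedCovMatrix ψ X *ᵥ w) := by
  rw [meanVariance_add_sum_smul, hgrad, dotProduct_comm, dotProduct_mulVec, ← mulVec_transpose,
    hw, zero_dotProduct, add_zero]

lemma meanVariance_add_le_of_gradient_eq_mulVec (hψ0 : ∀ ω, 0 ≤ ψ ω) (hψ : ∑ ω, ψ ω = 1)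
    {a : ℝ} (ha : 0 ≤ a) {Y : Ω → ℝ}
    {B : Matrix ι ρ ℝ} {c : ρ → ℝ} (hgrad : meanVarianceGradient ψ a Y X = B *ᵥ c)
    {w : ι → ℝ} (hw : Bᵀ *ᵥ w = 0) :
    meanVariance ψ a (Y + ∑ s, w s • X s) ≤ meanVariance ψ a Y := by
  rw [meanVariance_add_of_gradient_eq_mulVec hgrad hw, dotProduct_weightedCovMatrix_mulVec]
  linarith [mul_nonneg ha (weightedCov_self_nonneg hψ0 hψ (∑ s, w s • X s))]

lemma weightedCovMatrix_mulVec_eq_zero_of_le (hψ0 : ∀ ω, 0 ≤ ψ ω) (hψ : ∑ ω, ψ ω = 1)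
    {a : ℝ} (ha : 0 < a) {Y : Ω → ℝ}
    {B : Matrix ι ρ ℝ} {c : ρ → ℝ} (hgrad : meanVarianceGradient ψ a Y X = B *ᵥ c)
    {w : ι → ℝ} (hw : Bᵀ *ᵥ w = 0)
    (hle : meanVariance ψ a Y ≤ meanVariance ψ a (Y + ∑ s, w s • X s)) :
    weightedCovMatrix ψ X *ᵥ w = 0 := by
  have hPSD := posSemidef_weightedCovMatrix (X := X) hψ0 hψ
  rw [meanVariance_add_of_gradient_eq_mulVec hgrad hw] at hle
  have hq := hPSD.dotProduct_mulVec_nonneg w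
  rw [star_trivial] at hq
  refine (hPSD.dotProduct_mulVec_zero_iff w).mp ?_
  rw [star_trivial]
  nlinarith

end WeightedMoments

section Hedging

variable {α κ β : Type*}

def hedgedProfit (y : α → κ → ℝ) (u : α ⊕ β → ℝ) : (α × κ) × β → ℝ :=
  fun ω => y ω.1.1 ω.1.2 + u (Sum.inl ω.1.1) + u (Sum.inr ω.2)

lemma weightedMean_uncurry [Fintype α] [Fintype κ] [Fintype β] {ψ : α → κ → β → ℝ}
    (f : (α × κ) × β → ℝ) :
    weightedMean (uncurry (uncurry ψ)) f = ∑ i, ∑ k, ∑ j, ψ i k j * f ((i, k), j) := by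
  simp [weightedMean_apply, Fintype.sum_prod_type]

lemma meanVariance_hedgedProfit [Fintype α] [Fintype κ] [Fintype β] {ψ : α → κ → β → ℝ}
    (hψ : ∑ i, ∑ k, ∑ j, ψ i k j = 1) (y : α → κ → ℝ) (a : ℝ)
    (xP : α → ℝ) (xW : β → ℝ) :
    meanVariance (uncurry (uncurry ψ)) a (hedgedProfit y (Sum.elim xP xW))
      = (∑ i, ∑ k, ∑ j, ψ i k j * (y i k + xP i + xW j)) -
        a * (∑ i, ∑ k, ∑ j, ψ i k j *
          (y i k + xP i + xW j - ∑ i', ∑ k', ∑ j', ψ i' k' j' * (y i' k' + xP i' + xW j'))^2) := by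
  have hψ' : ∑ ω, uncurry (uncurry ψ) ω = 1 := by simpa [Fintype.sum_prod_type] using hψ
  rw [meanVariance, ← weightedMean_sq_sub_weightedMean hψ']
  simp [weightedMean_uncurry, hedgedProfit]

variable [DecidableEq α] [DecidableEq β]

def hedgeFeature : α ⊕ β → (α × κ) × β → ℝ :=
  Sum.elim (fun i ω => if ω.1.1 = i then 1 else 0) (fun j ω => if ω.2 = j then 1 else 0)

lemma sum_hedgeFeature_inl [Fintype α] :
    ∑ i : α, hedgeFeature (κ := κ) (β := β) (Sum.inl i) = 1 := by
  funext ω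
  simp [hedgeFeature]

lemma sum_hedgeFeature_inr [Fintype β] :
    ∑ j : β, hedgeFeature (α := α) (κ := κ) (Sum.inr j) = 1 := by
  funext ω
  simp [hedgeFeature]

variable [Fintype α] [Fintype β]

lemma hedgedProfit_eq_add_sum_smul (y : α → κ → ℝ) (u : α ⊕ β → ℝ) :
    hedgedProfit y u = (fun ω => y ω.1.1 ω.1.2) + ∑ s, u s • hedgeFeature s := by
  funext ω
  simp [hedgedProfit, hedgeFeature, Fintype.sum_sum_type, add_assoc]

lemma hedgedProfit_add (y : α → κ → ℝ) (u w : α ⊕ β → ℝ) :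
    hedgedProfit y (u + w) = hedgedProfit y u + ∑ s, w s • hedgeFeature s := by
  simp only [hedgedProfit_eq_add_sum_smul, Pi.add_apply, add_smul, sum_add_distrib, add_assoc]

variable [Fintype κ] {ψ : α → κ → β → ℝ}

lemma weightedCovMatrix_hedgeFeature {ψp : α → ℝ} {ψw : β → ℝ} {ψpw : Matrix α β ℝ}
    (hψp : ∀ i, ψp i = ∑ k, ∑ j, ψ i k j) (hψw : ∀ j, ψw j = ∑ i, ∑ k, ψ i k j)
    (hψpw : ∀ i j, ψpw i j = ∑ k, ψ i k j) {M : Matrix (α ⊕ β) (α ⊕ β) ℝ}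
    (hMpp : ∀ i i', M (Sum.inl i) (Sum.inl i') = (if i = i' then ψp i else 0) - ψp i * ψp i')
    (hMww : ∀ j j', M (Sum.inr j) (Sum.inr j') = (if j = j' then ψw j else 0) - ψw j * ψw j')
    (hMpw : ∀ i j, M (Sum.inl i) (Sum.inr j) = ψpw i j - ψp i * ψw j)
    (hMwp : ∀ i j, M (Sum.inr j) (Sum.inl i) = ψpw i j - ψp i * ψw j) :
    weightedCovMatrix (uncurry (uncurry ψ)) hedgeFeature = M := by
  ext (i | j) (i' | j')
  · rcases eq_or_ne i i' with rfl | h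
    · simp [weightedCovMatrix, weightedCov_apply, weightedMean_uncurry, hedgeFeature, hMpp, hψp]
    · simp [weightedCovMatrix, weightedCov_apply, weightedMean_uncurry, hedgeFeature, hMpp, hψp,
        h, h.symm]
  · simp [weightedCovMatrix, weightedCov_apply, weightedMean_uncurry, hedgeFeature, hMpw, hψp,
      hψw, hψpw]
  · simp [weightedCovMatrix, weightedCov_apply, weightedMean_uncurry, hedgeFeature, hMwp, hψp,
      hψw, hψpw, mul_comm]
  · rcases eq_or_ne j j' with rfl | h
    · simp [weightedCovMatrix, weightedCov_apply, weightedMean_uncurry, hedgeFeature, hMww, hψw]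
    · simp [weightedCovMatrix, weightedCov_apply, weightedMean_uncurry, hedgeFeature, hMww, hψw,
        h, h.symm]

lemma meanVarianceGradient_hedgedProfit {y : α → κ → ℝ} {ψp : α → ℝ} {ψw : β → ℝ}
    (hψp : ∀ i, ψp i = ∑ k, ∑ j, ψ i k j) (hψw : ∀ j, ψw j = ∑ i, ∑ k, ψ i k j)
    {μy : ℝ} (hμy : μy = ∑ i, ∑ k, ∑ j, ψ i k j * y i k)
    {vp : α → ℝ} (hvp : ∀ i, vp i = ∑ k, ∑ j, ψ i k j * y i k)
    {vw : β → ℝ} (hvw : ∀ j, vw j = ∑ i, ∑ k, ψ i k j * y i k)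
    {cp : α → ℝ} (hcp : ∀ i, cp i = μy * ψp i - vp i)
    {cw : β → ℝ} (hcw : ∀ j, cw j = μy * ψw j - vw j) (a : ℝ) (u : α ⊕ β → ℝ) :
    meanVarianceGradient (uncurry (uncurry ψ)) a (hedgedProfit y u) hedgeFeature
      = Sum.elim ψp ψw + (2 * a) • Sum.elim cp cw
        - (2 * a) • weightedCovMatrix (uncurry (uncurry ψ)) hedgeFeature *ᵥ u := by
  rw [hedgedProfit_eq_add_sum_smul, meanVarianceGradient_add_sum_smul]
  congr 1
  ext (i | j)
  · simp [meanVarianceGradient, weightedCov_apply, weightedMean_uncurry, hedgeFeature, hcp, hvp,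
      hψp, hμy]
    ring
  · simp [meanVarianceGradient, weightedCov_apply, weightedMean_uncurry, hedgeFeature, hcw, hvw,
      hψw, hμy]
    ring

end Hedging

section ConstraintMatrix

variable {α β : Type*} {φp : α → ℝ} {φw : β → ℝ} {B : Matrix (α ⊕ β) (Fin 2) ℝ}

lemma transpose_mulVec_eq_of_columns [Fintype α] [Fintype β] (hBp0 : ∀ i, B (Sum.inl i) 0 = φp i)
    (hBp1 : ∀ i, B (Sum.inl i) 1 = 0) (hBw0 : ∀ j, B (Sum.inr j) 0 = 0)
    (hBw1 : ∀ j, B (Sum.inr j) 1 = φw j) (v : α ⊕ β → ℝ) :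
    Bᵀ *ᵥ v = ![∑ i, φp i * v (Sum.inl i), ∑ j, φw j * v (Sum.inr j)] := by
  ext u
  fin_cases u <;> simp [mulVec, dotProduct, Fintype.sum_sum_type, hBp0, hBp1, hBw0, hBw1]

lemma mulVec_const_one_eq_of_columns (hBp0 : ∀ i, B (Sum.inl i) 0 = φp i)
    (hBp1 : ∀ i, B (Sum.inl i) 1 = 0) (hBw0 : ∀ j, B (Sum.inr j) 0 = 0)
    (hBw1 : ∀ j, B (Sum.inr j) 1 = φw j) :
    B *ᵥ (fun _ => 1) = Sum.elim φp φw := by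
  ext (i | j) <;> simp [mulVec, dotProduct, hBp0, hBp1, hBw0, hBw1]

end ConstraintMatrix

section ReducedSystem

variable {n m : ℕ}

lemma eq_of_castSucc_eq_of_sum_eq {f g : Fin (n + 1) → ℝ}
    (hcast : ∀ i : Fin n, f i.castSucc = g i.castSucc) (hsum : ∑ i, f i = ∑ i, g i) : f = g := by
  have hlast : f (Fin.last n) = g (Fin.last n) := by
    simpa [Fin.sum_univ_castSucc, hcast] using hsum
  funext i
  induction i using Fin.lastCases with
  | last => exact hlast
  | cast i => exact hcast i

lemma meanVarianceGradient_eq_of_comp_castSucc_eq {Ω : Type*} [Fintype Ω] {ψ : Ω → ℝ}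
    (hψ : ∑ ω, ψ ω = 1) {X : Fin (n + 1) ⊕ Fin (m + 1) → Ω → ℝ}
    (hXP : ∑ i, X (Sum.inl i) = 1) (hXW : ∑ j, X (Sum.inr j) = 1) {a : ℝ} {Y : Ω → ℝ}
    {bP : Fin (n + 1) → ℝ} {bW : Fin (m + 1) → ℝ} (hbP : ∑ i, bP i = 1) (hbW : ∑ j, bW j = 1)
    (hcast : meanVarianceGradient ψ a Y X ∘ Sum.map Fin.castSucc Fin.castSucc
      = Sum.elim bP bW ∘ Sum.map Fin.castSucc Fin.castSucc) :
    meanVarianceGradient ψ a Y X = Sum.elim bP bW := by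
  rw [← Sum.elim_comp_inl_inr (meanVarianceGradient ψ a Y X)]
  congr 1
  · refine eq_of_castSucc_eq_of_sum_eq (fun i => congrFun hcast (Sum.inl i)) ?_
    simpa [hbP] using sum_meanVarianceGradient hψ a Y hXP
  · refine eq_of_castSucc_eq_of_sum_eq (fun j => congrFun hcast (Sum.inr j)) ?_
    simpa [hbW] using sum_meanVarianceGradient hψ a Y hXW

lemma mulVec_eq_sumElim_of_rows {τ : Type*}
    {M : Matrix (Fin (n + 1) ⊕ Fin (m + 1)) (Fin (n + 1) ⊕ Fin (m + 1)) ℝ}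
    {B : Matrix (Fin (n + 1) ⊕ Fin (m + 1)) τ ℝ}
    {Mhat : Matrix (Fin n ⊕ Fin m) (Fin (n + 1) ⊕ Fin (m + 1)) ℝ}
    (hMhatp : ∀ (i : Fin n) t, Mhat (Sum.inl i) t = M (Sum.inl i.castSucc) t)
    (hMhatw : ∀ (j : Fin m) t, Mhat (Sum.inr j) t = M (Sum.inr j.castSucc) t)
    {K : Matrix ((Fin n ⊕ Fin m) ⊕ τ) (Fin (n + 1) ⊕ Fin (m + 1)) ℝ}
    (hKM : ∀ s t, K (Sum.inl s) t = Mhat s t) (hKB : ∀ u t, K (Sum.inr u) t = B t u)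
    (v : Fin (n + 1) ⊕ Fin (m + 1) → ℝ) :
    K *ᵥ v = Sum.elim ((M *ᵥ v) ∘ Sum.map Fin.castSucc Fin.castSucc) (Bᵀ *ᵥ v) := by
  ext ((i | j) | u) <;> simp [mulVec, dotProduct, hKM, hKB, hMhatp, hMhatw]

end ReducedSystem

section TwoFund

variable {n m l : ℕ} {ψ : Fin (n + 1) → Fin l → Fin (m + 1) → ℝ}

lemma meanVarianceGradient_hedgedProfit_eq_of_reduced (hψ1 : ∑ i, ∑ k, ∑ j, ψ i k j = 1)
    {ψp : Fin (n + 1) → ℝ} (hψp : ∀ i, ψp i = ∑ k, ∑ j, ψ i k j)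
    {ψw : Fin (m + 1) → ℝ} (hψw : ∀ j, ψw j = ∑ i, ∑ k, ψ i k j)
    {y : Fin (n + 1) → Fin l → ℝ} {μy : ℝ} (hμy : μy = ∑ i, ∑ k, ∑ j, ψ i k j * y i k)
    {vp : Fin (n + 1) → ℝ} (hvp : ∀ i, vp i = ∑ k, ∑ j, ψ i k j * y i k)
    {vw : Fin (m + 1) → ℝ} (hvw : ∀ j, vw j = ∑ i, ∑ k, ψ i k j * y i k)
    {cp : Fin (n + 1) → ℝ} (hcp : ∀ i, cp i = μy * ψp i - vp i)
    {cw : Fin (m + 1) → ℝ} (hcw : ∀ j, cw j = μy * ψw j - vw j)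
    {φ : Fin (n + 1) → Fin (m + 1) → ℝ} (hφ1 : ∑ i, ∑ j, φ i j = 1)
    {φp : Fin (n + 1) → ℝ} (hφp : ∀ i, φp i = ∑ j, φ i j)
    {φw : Fin (m + 1) → ℝ} (hφw : ∀ j, φw j = ∑ i, φ i j)
    {chat : Fin n ⊕ Fin m → ℝ} (hchatp : ∀ i : Fin n, chat (Sum.inl i) = cp i.castSucc)
    (hchatw : ∀ j : Fin m, chat (Sum.inr j) = cw j.castSucc)
    {dhat : Fin n ⊕ Fin m → ℝ} (hdhatp : ∀ i : Fin n, dhat (Sum.inl i) = ψp i.castSucc)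
    (hdhatw : ∀ j : Fin m, dhat (Sum.inr j) = ψw j.castSucc)
    {bhat : Fin n ⊕ Fin m → ℝ} (hbhatp : ∀ i : Fin n, bhat (Sum.inl i) = φp i.castSucc)
    (hbhatw : ∀ j : Fin m, bhat (Sum.inr j) = φw j.castSucc)
    {a : ℝ} (ha : a ≠ 0) {u : Fin (n + 1) ⊕ Fin (m + 1) → ℝ}
    (hu : (weightedCovMatrix (uncurry (uncurry ψ)) hedgeFeature *ᵥ u)
      ∘ Sum.map Fin.castSucc Fin.castSucc = chat + (1 / (2 * a)) • (dhat - bhat)) :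
    meanVarianceGradient (uncurry (uncurry ψ)) a (hedgedProfit y u) hedgeFeature
      = Sum.elim φp φw := by
  refine meanVarianceGradient_eq_of_comp_castSucc_eq
    (by simpa [Fintype.sum_prod_type] using hψ1) sum_hedgeFeature_inl sum_hedgeFeature_inr
    (by simpa [hφp] using hφ1) (by simpa [hφw, Finset.sum_comm (γ := Fin (n + 1))] using hφ1) ?_
  rw [meanVarianceGradient_hedgedProfit hψp hψw hμy hvp hvw hcp hcw]
  ext (i | j)
  · have hui := congrFun hu (Sum.inl i)
    simp only [Function.comp_apply, Sum.map_inl, Pi.add_apply, Pi.smul_apply, Pi.sub_apply, smul_eq_mul,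
      hchatp, hdhatp, hbhatp] at hui
    simp only [Function.comp_apply, Sum.map_inl, Pi.add_apply, Pi.sub_apply, Pi.smul_apply, smul_eq_mul,
      Sum.elim_inl, hui]
    field_simp
    ring
  · have huj := congrFun hu (Sum.inr j)
    simp only [Function.comp_apply, Sum.map_inr, Pi.add_apply, Pi.smul_apply, Pi.sub_apply, smul_eq_mul,
      hchatw, hdhatw, hbhatw] at huj
    simp only [Function.comp_apply, Sum.map_inr, Pi.add_apply, Pi.sub_apply, Pi.smul_apply, smul_eq_mul,
      Sum.elim_inr, huj]
    field_simp
    ring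

end TwoFund

theorem stmt_14_general (n m l : ℕ)
    (ψ : Fin (n+1) → Fin l → Fin (m+1) → ℝ)
    (hψ0 : ∀ i k j, 0 ≤ ψ i k j)
    (hψ1 : ∑ i, ∑ k, ∑ j, ψ i k j = 1)
    (ψp : Fin (n+1) → ℝ) (hψp : ∀ i, ψp i = ∑ k, ∑ j, ψ i k j)
    (ψw : Fin (m+1) → ℝ) (hψw : ∀ j, ψw j = ∑ i, ∑ k, ψ i k j)
    (ψpw : Matrix (Fin (n+1)) (Fin (m+1)) ℝ) (hψpw : ∀ i j, ψpw i j = ∑ k, ψ i k j)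
    (y : Fin (n+1) → Fin l → ℝ)
    (μy : ℝ) (hμy : μy = ∑ i, ∑ k, ∑ j, ψ i k j * y i k)
    (vp : Fin (n+1) → ℝ) (hvp : ∀ i, vp i = ∑ k, ∑ j, ψ i k j * y i k)
    (vw : Fin (m+1) → ℝ) (hvw : ∀ j, vw j = ∑ i, ∑ k, ψ i k j * y i k)
    (cp : Fin (n+1) → ℝ) (hcp : ∀ i, cp i = μy * ψp i - vp i)
    (cw : Fin (m+1) → ℝ) (hcw : ∀ j, cw j = μy * ψw j - vw j)
    (M : Matrix (Fin (n+1) ⊕ Fin (m+1)) (Fin (n+1) ⊕ Fin (m+1)) ℝ)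
    (hMpp : ∀ i i', M (Sum.inl i) (Sum.inl i') = (if i = i' then ψp i else 0) - ψp i * ψp i')
    (hMww : ∀ j j', M (Sum.inr j) (Sum.inr j') = (if j = j' then ψw j else 0) - ψw j * ψw j')
    (hMpw : ∀ i j, M (Sum.inl i) (Sum.inr j) = ψpw i j - ψp i * ψw j)
    (hMwp : ∀ i j, M (Sum.inr j) (Sum.inl i) = ψpw i j - ψp i * ψw j)
    (φ : Fin (n+1) → Fin (m+1) → ℝ)
    (hφ1 : ∑ i, ∑ j, φ i j = 1)
    (φp : Fin (n+1) → ℝ) (hφp : ∀ i, φp i = ∑ j, φ i j)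
    (φw : Fin (m+1) → ℝ) (hφw : ∀ j, φw j = ∑ i, φ i j)
    (B : Matrix (Fin (n+1) ⊕ Fin (m+1)) (Fin 2) ℝ)
    (hBp0 : ∀ i, B (Sum.inl i) 0 = φp i) (hBp1 : ∀ i, B (Sum.inl i) 1 = 0)
    (hBw0 : ∀ j, B (Sum.inr j) 0 = 0) (hBw1 : ∀ j, B (Sum.inr j) 1 = φw j)
    (Mhat : Matrix (Fin n ⊕ Fin m) (Fin (n+1) ⊕ Fin (m+1)) ℝ)
    (hMhatp : ∀ (i : Fin n) t, Mhat (Sum.inl i) t = M (Sum.inl i.castSucc) t)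
    (hMhatw : ∀ (j : Fin m) t, Mhat (Sum.inr j) t = M (Sum.inr j.castSucc) t)
    (chat : Fin n ⊕ Fin m → ℝ)
    (hchatp : ∀ i : Fin n, chat (Sum.inl i) = cp i.castSucc)
    (hchatw : ∀ j : Fin m, chat (Sum.inr j) = cw j.castSucc)
    (dhat : Fin n ⊕ Fin m → ℝ)
    (hdhatp : ∀ i : Fin n, dhat (Sum.inl i) = ψp i.castSucc)
    (hdhatw : ∀ j : Fin m, dhat (Sum.inr j) = ψw j.castSucc)
    (bhat : Fin n ⊕ Fin m → ℝ)
    (hbhatp : ∀ i : Fin n, bhat (Sum.inl i) = φp i.castSucc)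
    (hbhatw : ∀ j : Fin m, bhat (Sum.inr j) = φw j.castSucc)
    (K : Matrix ((Fin n ⊕ Fin m) ⊕ Fin 2) (Fin (n+1) ⊕ Fin (m+1)) ℝ)
    (hKM : ∀ s t, K (Sum.inl s) t = Mhat s t)
    (hKB : ∀ (u : Fin 2) t, K (Sum.inr u) t = B t u)
    (K' : Matrix (Fin (n+1) ⊕ Fin (m+1)) ((Fin n ⊕ Fin m) ⊕ Fin 2) ℝ)
    (hKK' : K * K' = 1) (hK'K : K' * K = 1)
    (F : ℝ → (Fin (n+1) → ℝ) → (Fin (m+1) → ℝ) → ℝ)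
    (hF : ∀ (a : ℝ) (xP : Fin (n+1) → ℝ) (xW : Fin (m+1) → ℝ), F a xP xW =
      (∑ i, ∑ k, ∑ j, ψ i k j * (y i k + xP i + xW j)) -
      a * (∑ i, ∑ k, ∑ j, ψ i k j *
        (y i k + xP i + xW j - ∑ i', ∑ k', ∑ j', ψ i' k' j' * (y i' k' + xP i' + xW j'))^2))
    (xo : Fin (n+1) ⊕ Fin (m+1) → ℝ)
    (hxo : xo = K'.mulVec (Sum.elim (fun s => dhat s - bhat s) (fun _ => 0)))
    (xInf : Fin (n+1) ⊕ Fin (m+1) → ℝ)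
    (hxInf : xInf = K'.mulVec (Sum.elim chat (fun _ => 0))) :
    ∀ a : ℝ, 0 < a →
      ((∑ i, φp i * (xInf (Sum.inl i) + (1/(2*a)) * xo (Sum.inl i))) = 0 ∧
       (∑ j, φw j * (xInf (Sum.inr j) + (1/(2*a)) * xo (Sum.inr j))) = 0 ∧
       (∀ (xP : Fin (n+1) → ℝ) (xW : Fin (m+1) → ℝ),
         (∑ i, φp i * xP i) = 0 → (∑ j, φw j * xW j) = 0 →
         F a xP xW ≤ F a (fun i => xInf (Sum.inl i) + (1/(2*a)) * xo (Sum.inl i))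
                        (fun j => xInf (Sum.inr j) + (1/(2*a)) * xo (Sum.inr j)))) ∧
      (∀ (xP : Fin (n+1) → ℝ) (xW : Fin (m+1) → ℝ),
        (∑ i, φp i * xP i) = 0 → (∑ j, φw j * xW j) = 0 →
        (∀ (xP' : Fin (n+1) → ℝ) (xW' : Fin (m+1) → ℝ),
          (∑ i, φp i * xP' i) = 0 → (∑ j, φw j * xW' j) = 0 → F a xP' xW' ≤ F a xP xW) →
        Sum.elim xP xW = fun s => xInf s + (1/(2*a)) * xo s) := by
  intro a ha
  set x : Fin (n + 1) ⊕ Fin (m + 1) → ℝ := fun s => xInf s + 1 / (2 * a) * xo s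
  have hψ' : ∑ ω, uncurry (uncurry ψ) ω = 1 := by simpa [Fintype.sum_prod_type] using hψ1
  have hψ0' : ∀ ω, 0 ≤ uncurry (uncurry ψ) ω := fun _ => hψ0 _ _ _
  have hMC := weightedCovMatrix_hedgeFeature hψp hψw hψpw hMpp hMww hMpw hMwp
  have hKv := mulVec_eq_sumElim_of_rows hMhatp hMhatw hKM hKB
  have hBv := transpose_mulVec_eq_of_columns hBp0 hBp1 hBw0 hBw1
  have hKx : K *ᵥ x = Sum.elim (chat + (1 / (2 * a)) • (dhat - bhat)) 0 := by
    rw [show x = xInf + (1 / (2 * a)) • xo from rfl, mulVec_add, mulVec_smul, hxInf, hxo,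
      mulVec_mulVec, mulVec_mulVec, hKK', one_mulVec, one_mulVec]
    ext (s | u) <;> simp
  obtain ⟨hMx, hBx⟩ := Sum.elim_eq_iff.mp ((hKv x).symm.trans hKx)
  have hgrad : meanVarianceGradient (uncurry (uncurry ψ)) a (hedgedProfit y x) hedgeFeature
      = B *ᵥ fun _ => 1 := by
    rw [mulVec_const_one_eq_of_columns hBp0 hBp1 hBw0 hBw1]
    exact meanVarianceGradient_hedgedProfit_eq_of_reduced hψ1 hψp hψw hμy hvp hvw hcp hcw hφ1 hφp
      hφw hchatp hchatw hdhatp hdhatw hbhatp hbhatw ha.ne' (hMC ▸ hMx)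
  have hxP : ∑ i, φp i * x (Sum.inl i) = 0 := by simpa [hBv] using congrFun hBx 0
  have hxW : ∑ j, φw j * x (Sum.inr j) = 0 := by simpa [hBv] using congrFun hBx 1
  have hfeas : ∀ xP xW, (∑ i, φp i * xP i) = 0 → (∑ j, φw j * xW j) = 0 →
      Bᵀ *ᵥ (Sum.elim xP xW - x) = 0 := by
    intro xP xW hP hW
    rw [mulVec_sub, hBx, hBv]; ext u; fin_cases u <;> simp [hP, hW]
  have hF' : ∀ xP xW, F a xP xW = meanVariance (uncurry (uncurry ψ)) a
      (hedgedProfit y x + ∑ s, (Sum.elim xP xW - x) s • hedgeFeature s) := by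
    intro xP xW
    rw [hF, ← meanVariance_hedgedProfit hψ1, ← hedgedProfit_add, add_sub_cancel]
  have hFx : F a (fun i => x (Sum.inl i)) (fun j => x (Sum.inr j))
      = meanVariance (uncurry (uncurry ψ)) a (hedgedProfit y x) := by
    rw [hF, ← meanVariance_hedgedProfit hψ1]
    rfl
  refine ⟨⟨hxP, hxW, fun xP xW hP hW => ?_⟩, fun xP xW hP hW hmax => ?_⟩
  · rw [hF', hFx]
    exact meanVariance_add_le_of_gradient_eq_mulVec hψ0' hψ' ha.le hgrad (hfeas xP xW hP hW)
  · have hCw := weightedCovMatrix_mulVec_eq_zero_of_le hψ0' hψ' ha hgrad (hfeas xP xW hP hW)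
      (by rw [← hF', ← hFx]; exact hmax _ _ hxP hxW)
    have hKw : K *ᵥ (Sum.elim xP xW - x) = 0 := by
      rw [hKv, ← hMC, hCw, hfeas xP xW hP hW]
      ext (s | u) <;> rfl
    exact sub_eq_zero.mp (by simpa [mulVec_mulVec, hK'K] using congrArg (K' *ᵥ ·) hKw)

theorem stmt_14 (n m l : ℕ) (hl : 1 ≤ l)
    (p : Fin (n+1) → ℝ) (q : Fin l → ℝ) (w : Fin (m+1) → ℝ)
    (ψ : Fin (n+1) → Fin l → Fin (m+1) → ℝ)
    (hψ0 : ∀ i k j, 0 ≤ ψ i k j)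
    (hψ1 : ∑ i, ∑ k, ∑ j, ψ i k j = 1)
    (ψp : Fin (n+1) → ℝ) (hψp : ∀ i, ψp i = ∑ k, ∑ j, ψ i k j)
    (ψw : Fin (m+1) → ℝ) (hψw : ∀ j, ψw j = ∑ i, ∑ k, ψ i k j)
    (ψpw : Matrix (Fin (n+1)) (Fin (m+1)) ℝ) (hψpw : ∀ i j, ψpw i j = ∑ k, ψ i k j)
    (r : ℝ) (y : Fin (n+1) → Fin l → ℝ) (hy : ∀ i k, y i k = (r - p i) * q k)
    (μy : ℝ) (hμy : μy = ∑ i, ∑ k, ∑ j, ψ i k j * y i k)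
    (σy2 : ℝ) (hσy2 : σy2 = ∑ i, ∑ k, ∑ j, ψ i k j * (y i k - μy)^2)
    (vp : Fin (n+1) → ℝ) (hvp : ∀ i, vp i = ∑ k, ∑ j, ψ i k j * y i k)
    (vw : Fin (m+1) → ℝ) (hvw : ∀ j, vw j = ∑ i, ∑ k, ψ i k j * y i k)
    (cp : Fin (n+1) → ℝ) (hcp : ∀ i, cp i = μy * ψp i - vp i)
    (cw : Fin (m+1) → ℝ) (hcw : ∀ j, cw j = μy * ψw j - vw j)
    (M : Matrix (Fin (n+1) ⊕ Fin (m+1)) (Fin (n+1) ⊕ Fin (m+1)) ℝ)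
    (hMpp : ∀ i i', M (Sum.inl i) (Sum.inl i') = (if i = i' then ψp i else 0) - ψp i * ψp i')
    (hMww : ∀ j j', M (Sum.inr j) (Sum.inr j') = (if j = j' then ψw j else 0) - ψw j * ψw j')
    (hMpw : ∀ i j, M (Sum.inl i) (Sum.inr j) = ψpw i j - ψp i * ψw j)
    (hMwp : ∀ i j, M (Sum.inr j) (Sum.inl i) = ψpw i j - ψp i * ψw j)
    (φ : Fin (n+1) → Fin (m+1) → ℝ)
    (hφ0 : ∀ i j, 0 ≤ φ i j) (hφ1 : ∑ i, ∑ j, φ i j = 1)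
    (φp : Fin (n+1) → ℝ) (hφp : ∀ i, φp i = ∑ j, φ i j)
    (φw : Fin (m+1) → ℝ) (hφw : ∀ j, φw j = ∑ i, φ i j)
    (B : Matrix (Fin (n+1) ⊕ Fin (m+1)) (Fin 2) ℝ)
    (hBp0 : ∀ i, B (Sum.inl i) 0 = φp i) (hBp1 : ∀ i, B (Sum.inl i) 1 = 0)
    (hBw0 : ∀ j, B (Sum.inr j) 0 = 0) (hBw1 : ∀ j, B (Sum.inr j) 1 = φw j)
    (Mhat : Matrix (Fin n ⊕ Fin m) (Fin (n+1) ⊕ Fin (m+1)) ℝ)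
    (hMhatp : ∀ (i : Fin n) t, Mhat (Sum.inl i) t = M (Sum.inl i.castSucc) t)
    (hMhatw : ∀ (j : Fin m) t, Mhat (Sum.inr j) t = M (Sum.inr j.castSucc) t)
    (chat : Fin n ⊕ Fin m → ℝ)
    (hchatp : ∀ i : Fin n, chat (Sum.inl i) = cp i.castSucc)
    (hchatw : ∀ j : Fin m, chat (Sum.inr j) = cw j.castSucc)
    (dhat : Fin n ⊕ Fin m → ℝ)
    (hdhatp : ∀ i : Fin n, dhat (Sum.inl i) = ψp i.castSucc)
    (hdhatw : ∀ j : Fin m, dhat (Sum.inr j) = ψw j.castSucc)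
    (bhat : Fin n ⊕ Fin m → ℝ)
    (hbhatp : ∀ i : Fin n, bhat (Sum.inl i) = φp i.castSucc)
    (hbhatw : ∀ j : Fin m, bhat (Sum.inr j) = φw j.castSucc)
    (K : Matrix ((Fin n ⊕ Fin m) ⊕ Fin 2) (Fin (n+1) ⊕ Fin (m+1)) ℝ)
    (hKM : ∀ s t, K (Sum.inl s) t = Mhat s t)
    (hKB : ∀ (u : Fin 2) t, K (Sum.inr u) t = B t u)
    (K' : Matrix (Fin (n+1) ⊕ Fin (m+1)) ((Fin n ⊕ Fin m) ⊕ Fin 2) ℝ)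
    (hKK' : K * K' = 1) (hK'K : K' * K = 1)
    (F : ℝ → (Fin (n+1) → ℝ) → (Fin (m+1) → ℝ) → ℝ)
    (hF : ∀ (a : ℝ) (xP : Fin (n+1) → ℝ) (xW : Fin (m+1) → ℝ), F a xP xW =
      (∑ i, ∑ k, ∑ j, ψ i k j * (y i k + xP i + xW j)) -
      a * (∑ i, ∑ k, ∑ j, ψ i k j *
        (y i k + xP i + xW j - ∑ i', ∑ k', ∑ j', ψ i' k' j' * (y i' k' + xP i' + xW j'))^2))
    (xo : Fin (n+1) ⊕ Fin (m+1) → ℝ)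
    (hxo : xo = K'.mulVec (Sum.elim (fun s => dhat s - bhat s) (fun _ => 0)))
    (xInf : Fin (n+1) ⊕ Fin (m+1) → ℝ)
    (hxInf : xInf = K'.mulVec (Sum.elim chat (fun _ => 0))) :
    ∀ a : ℝ, 0 < a →
      ((∑ i, φp i * (xInf (Sum.inl i) + (1/(2*a)) * xo (Sum.inl i))) = 0 ∧
       (∑ j, φw j * (xInf (Sum.inr j) + (1/(2*a)) * xo (Sum.inr j))) = 0 ∧
       (∀ (xP : Fin (n+1) → ℝ) (xW : Fin (m+1) → ℝ),
         (∑ i, φp i * xP i) = 0 → (∑ j, φw j * xW j) = 0 →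
         F a xP xW ≤ F a (fun i => xInf (Sum.inl i) + (1/(2*a)) * xo (Sum.inl i))
                        (fun j => xInf (Sum.inr j) + (1/(2*a)) * xo (Sum.inr j)))) ∧
      (∀ (xP : Fin (n+1) → ℝ) (xW : Fin (m+1) → ℝ),
        (∑ i, φp i * xP i) = 0 → (∑ j, φw j * xW j) = 0 →
        (∀ (xP' : Fin (n+1) → ℝ) (xW' : Fin (m+1) → ℝ),
          (∑ i, φp i * xP' i) = 0 → (∑ j, φw j * xW' j) = 0 → F a xP' xW' ≤ F a xP xW) →
        Sum.elim xP xW = fun s => xInf s + (1/(2*a)) * xo s) :=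
  stmt_14_general n m l ψ hψ0 hψ1 ψp hψp ψw hψw ψpw hψpw y μy hμy vp hvp vw hvw cp hcp cw hcw M hMpp
    hMww hMpw hMwp φ hφ1 φp hφp φw hφw B hBp0 hBp1 hBw0 hBw1 Mhat hMhatp hMhatw chat hchatp hchatw
    dhat hdhatp hdhatw bhat hbhatp hbhatw K hKM hKB K' hKK' hK'K F hF xo hxo xInf hxInf
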